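/- arXiv:1404.7409 — 2 statements merged into one kernel-verified Lean document; each statement's English description precedes it below -/
import Mathlib

section
/- Fix 0 < q < 1 and θ > 0. For real X > 0 and real Y, with f_0 as above, d/dY Re[f_0(X+iY)] = -sin(Y log q) · log(q) · Σ_{k=0}^∞ q^{X+k} ( 1/(1-q^{θ+k})^2 - 1/|1 - q^{X+iY+k}|^2 ). -/
open Complex Real

/-- The infinite q-Pochhammer symbol `(a; q)_∞ = ∏_{k=0}^∞ (1 - a q^k)`. -/
noncomputable def qPoch (a q : ℂ) : ℂ := ∏' k : ℕ, (1 - a * q ^ k)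

/-- The q-Gamma function `Γ_q(z) = (1-q)^{1-z} (q;q)_∞ / (q^z;q)_∞`. -/
noncomputable def qGamma (q : ℝ) (z : ℂ) : ℂ :=
  ((1 - q : ℂ)) ^ ((1 : ℂ) - z) * qPoch (q : ℂ) (q : ℂ) / qPoch ((q : ℂ) ^ z) (q : ℂ)

/-- The q-digamma function `Ψ_q(z) = d/dz log Γ_q(z)`. -/
noncomputable def qDigamma (q : ℝ) (z : ℂ) : ℂ :=
  deriv (fun w => Complex.log (qGamma q w)) z

/-- `κ(q,θ) = Ψ'_q(θ) / ((log q)^2 q^θ)`. -/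
noncomputable def kappaC (q θ : ℝ) : ℂ :=
  deriv (qDigamma q) (θ : ℂ) / (((Real.log q : ℂ)) ^ 2 * (q : ℂ) ^ (θ : ℂ))

/-- `f(q,θ) = Ψ'_q(θ)/(log q)^2 - Ψ_q(θ)/log q - log(1-q)/log q`. -/
noncomputable def fC (q θ : ℝ) : ℂ :=
  deriv (qDigamma q) (θ : ℂ) / ((Real.log q : ℂ)) ^ 2
    - qDigamma q (θ : ℂ) / (Real.log q : ℂ)
    - (Real.log (1 - q) : ℂ) / (Real.log q : ℂ)

/-- `f₀(Z) = -f (log q) Z + κ q^Z + log((q^Z; q)_∞)`. -/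
noncomputable def f0 (q θ : ℝ) (Z : ℂ) : ℂ :=
  -fC q θ * (Real.log q : ℂ) * Z + kappaC q θ * (q : ℂ) ^ Z
    + Complex.log (qPoch ((q : ℂ) ^ Z) (q : ℂ))

/-!
On `0 < re z` the series `∑ log (1 - q^(z+k))` is a holomorphic logarithm of `(q^z; q)_∞`, so
`Re f₀ = Re F` for a holomorphic `F`, and `d/dY Re F(X + iY) = -Im F'(X + iY)`. Weierstrass'
theorem (with geometric bounds on the terms) differentiates the series termwise. The same
series at real `θ` make `Ψ_q(θ)`, `Ψ'_q(θ)` real, with `κ = ∑ q^k / (1 - q^(θ+k))²`, and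
`Im (u / (1 - u)) = Im u / |1 - u|²` turns `Im F'` into the stated sum.
-/

open Filter Topology

theorem hasDerivAt_tsum_of_summable_norm {ι : Type*} {F F' : ι → ℂ → ℂ} {U : Set ℂ}
    {u : ι → ℝ} {z : ℂ} (hu : Summable u) (hU : IsOpen U)
    (hF : ∀ i, ∀ w ∈ U, HasDerivAt (F i) (F' i w) w)
    (hF_le : ∀ i, ∀ w ∈ U, ‖F i w‖ ≤ u i) (hz : z ∈ U) :
    HasDerivAt (fun w => ∑' i, F i w) (∑' i, F' i z) z := by
  have hdiff : ∀ i, DifferentiableOn ℂ (F i) U := fun i w hw =>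
    (hF i w hw).differentiableAt.differentiableWithinAt
  have hsum := hasSum_deriv_of_summable_norm hu hdiff hU hF_le hz
  simp only [fun i => (hF i z hz).deriv] at hsum
  rw [hsum.tsum_eq]
  exact ((differentiableOn_tsum_of_summable_norm hu hdiff hU hF_le).differentiableAt
    (hU.mem_nhds hz)).hasDerivAt

theorem HasDerivAt.re_comp_vertical {g : ℂ → ℂ} {g' : ℂ} {x y : ℝ}
    (h : HasDerivAt g g' (x + y * I)) :
    HasDerivAt (fun t : ℝ => (g (x + t * I)).re) (-g'.im) y := by
  have hline : HasDerivAt (fun t : ℝ => (x : ℂ) + t * I) I y := by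
    simpa using ((hasDerivAt_id y).ofReal_comp.mul_const I).const_add (x : ℂ)
  have := reCLM.hasFDerivAt.comp_hasDerivAt y (h.scomp y hline)
  simpa [Function.comp_def] using this

theorem norm_log_one_sub_le {w : ℂ} (hw : ‖w‖ < 1) : ‖log (1 - w)‖ ≤ ‖w‖ / (1 - ‖w‖) := by
  have h := norm_log_one_add_le (z := -w) (by simpa using hw)
  rw [norm_neg, ← sub_eq_add_neg] at h
  refine h.trans ?_
  have hpos : 0 < 1 - ‖w‖ := by linarith
  rw [le_div_iff₀ hpos]
  field_simp
  nlinarith [norm_nonneg w]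

theorem norm_div_one_sub_le {w : ℂ} (hw : ‖w‖ < 1) : ‖w / (1 - w)‖ ≤ ‖w‖ / (1 - ‖w‖) := by
  rw [norm_div]
  refine div_le_div_of_nonneg_left (norm_nonneg w) (by linarith) ?_
  simpa using norm_sub_norm_le (1 : ℂ) w

section

variable {q : ℝ}

theorem norm_cpow_add_nat (hq0 : 0 < q) (z : ℂ) (k : ℕ) :
    ‖(q : ℂ) ^ (z + k)‖ = q ^ z.re * q ^ k := by
  rw [norm_cpow_eq_rpow_re_of_pos hq0, add_re, natCast_re, Real.rpow_add hq0,
    Real.rpow_natCast]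

theorem norm_cpow_add_nat_lt_one (hq0 : 0 < q) (hq1 : q < 1) {z : ℂ} (hz : 0 < z.re)
    (k : ℕ) : ‖(q : ℂ) ^ (z + k)‖ < 1 := by
  rw [norm_cpow_add_nat hq0]
  exact mul_lt_one_of_nonneg_of_lt_one_left (by positivity) (Real.rpow_lt_one hq0.le hq1 hz)
    (pow_le_one₀ hq0.le hq1.le)

theorem one_sub_cpow_add_nat_mem_slitPlane (hq0 : 0 < q) (hq1 : q < 1) {z : ℂ}
    (hz : 0 < z.re) (k : ℕ) : 1 - (q : ℂ) ^ (z + k) ∈ slitPlane := by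
  rw [sub_eq_add_neg]
  exact mem_slitPlane_of_norm_lt_one (by simpa using norm_cpow_add_nat_lt_one hq0 hq1 hz k)

theorem norm_cpow_add_nat_div_le (hq0 : 0 < q) (hq1 : q < 1) {c : ℝ} (hc0 : 0 < c) {z : ℂ}
    (hc : c ≤ z.re) (k : ℕ) :
    ‖(q : ℂ) ^ (z + k)‖ / (1 - ‖(q : ℂ) ^ (z + k)‖) ≤ q ^ c / (1 - q ^ c) * q ^ k := by
  have hqc : q ^ c < 1 := Real.rpow_lt_one hq0.le hq1 hc0
  have hle : ‖(q : ℂ) ^ (z + k)‖ ≤ q ^ c * q ^ k := by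
    rw [norm_cpow_add_nat hq0]
    exact mul_le_mul_of_nonneg_right (Real.rpow_le_rpow_of_exponent_ge hq0 hq1.le hc)
      (by positivity)
  have hle' : q ^ c * q ^ k ≤ q ^ c :=
    mul_le_of_le_one_right (by positivity) (pow_le_one₀ hq0.le hq1.le)
  calc ‖(q : ℂ) ^ (z + k)‖ / (1 - ‖(q : ℂ) ^ (z + k)‖) ≤ q ^ c * q ^ k / (1 - q ^ c) :=
        div_le_div₀ (by positivity) hle (by linarith) (by linarith)
    _ = q ^ c / (1 - q ^ c) * q ^ k := by ring

theorem summable_of_norm_le_cpow_div (hq0 : 0 < q) (hq1 : q < 1) {F : ℕ → ℂ} {z : ℂ}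
    (hz : 0 < z.re) (hF : ∀ k, ‖F k‖ ≤ ‖(q : ℂ) ^ (z + k)‖ / (1 - ‖(q : ℂ) ^ (z + k)‖)) :
    Summable F :=
  .of_norm_bounded ((summable_geometric_of_lt_one hq0.le hq1).mul_left _)
    fun k => (hF k).trans (norm_cpow_add_nat_div_le hq0 hq1 hz le_rfl k)

theorem hasDerivAt_tsum_of_norm_le_cpow_div (hq0 : 0 < q) (hq1 : q < 1) {F F' : ℕ → ℂ → ℂ}
    {z : ℂ} (hz : 0 < z.re) (hF : ∀ k w, 0 < w.re → HasDerivAt (F k) (F' k w) w)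
    (hF_le : ∀ k w, 0 < w.re →
      ‖F k w‖ ≤ ‖(q : ℂ) ^ (w + k)‖ / (1 - ‖(q : ℂ) ^ (w + k)‖)) :
    HasDerivAt (fun w => ∑' k, F k w) (∑' k, F' k z) z := by
  have hc0 : 0 < z.re / 2 := half_pos hz
  refine hasDerivAt_tsum_of_summable_norm (U := {w | z.re / 2 < w.re})
    ((summable_geometric_of_lt_one hq0.le hq1).mul_left _)
    (isOpen_lt continuous_const continuous_re)
    (fun k w hw => hF k w (hc0.trans hw))
    (fun k w hw => (hF_le k w (hc0.trans hw)).trans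
      (norm_cpow_add_nat_div_le hq0 hq1 hc0 (le_of_lt hw) k))
    (half_lt_self hz)

theorem hasDerivAt_ofReal_cpow (hq0 : 0 < q) (z : ℂ) :
    HasDerivAt (fun w : ℂ => (q : ℂ) ^ w) (Real.log q * (q : ℂ) ^ z) z := by
  refine ((hasDerivAt_id z).const_cpow (c := (q : ℂ))
    (Or.inl (by exact_mod_cast hq0.ne'))).congr_deriv ?_
  rw [ofReal_log hq0.le, id, mul_one, mul_comm]

theorem hasDerivAt_cpow_add_nat (hq0 : 0 < q) (k : ℕ) (z : ℂ) :
    HasDerivAt (fun w : ℂ => (q : ℂ) ^ (w + k)) (Real.log q * (q : ℂ) ^ (z + k)) z :=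
  (hasDerivAt_ofReal_cpow hq0 (z + k)).comp_add_const z k

theorem hasDerivAt_log_one_sub_cpow (hq0 : 0 < q) (hq1 : q < 1) {z : ℂ} (hz : 0 < z.re)
    (k : ℕ) :
    HasDerivAt (fun w : ℂ => log (1 - (q : ℂ) ^ (w + k)))
      (-Real.log q * ((q : ℂ) ^ (z + k) / (1 - (q : ℂ) ^ (z + k)))) z := by
  refine (((hasDerivAt_cpow_add_nat hq0 k z).const_sub 1).clog
    (one_sub_cpow_add_nat_mem_slitPlane hq0 hq1 hz k)).congr_deriv ?_
  ring

theorem hasDerivAt_cpow_div_one_sub_cpow (hq0 : 0 < q) (hq1 : q < 1) {z : ℂ}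
    (hz : 0 < z.re) (k : ℕ) :
    HasDerivAt (fun w : ℂ => (q : ℂ) ^ (w + k) / (1 - (q : ℂ) ^ (w + k)))
      (Real.log q * ((q : ℂ) ^ (z + k) / (1 - (q : ℂ) ^ (z + k)) ^ 2)) z := by
  have hu := hasDerivAt_cpow_add_nat hq0 k z
  refine (hu.fun_div (hu.const_sub 1)
    (slitPlane_ne_zero (one_sub_cpow_add_nat_mem_slitPlane hq0 hq1 hz k))).congr_deriv ?_
  ring

end

/-- A branch of `log (q^z; q)_∞` that is holomorphic on `0 < re z`. -/
noncomputable def qLogPoch (q : ℝ) (z : ℂ) : ℂ := ∑' k : ℕ, log (1 - (q : ℂ) ^ (z + k))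

noncomputable def qRatioSum (q : ℝ) (z : ℂ) : ℂ :=
  ∑' k : ℕ, (q : ℂ) ^ (z + k) / (1 - (q : ℂ) ^ (z + k))

section

variable {q : ℝ}

theorem summable_log_one_sub_cpow (hq0 : 0 < q) (hq1 : q < 1) {z : ℂ} (hz : 0 < z.re) :
    Summable fun k : ℕ => log (1 - (q : ℂ) ^ (z + k)) :=
  summable_of_norm_le_cpow_div hq0 hq1 hz fun k =>
    norm_log_one_sub_le (norm_cpow_add_nat_lt_one hq0 hq1 hz k)

theorem summable_cpow_div_one_sub_cpow (hq0 : 0 < q) (hq1 : q < 1) {z : ℂ} (hz : 0 < z.re) :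
    Summable fun k : ℕ => (q : ℂ) ^ (z + k) / (1 - (q : ℂ) ^ (z + k)) :=
  summable_of_norm_le_cpow_div hq0 hq1 hz fun k =>
    norm_div_one_sub_le (norm_cpow_add_nat_lt_one hq0 hq1 hz k)

theorem hasDerivAt_qLogPoch (hq0 : 0 < q) (hq1 : q < 1) {z : ℂ} (hz : 0 < z.re) :
    HasDerivAt (qLogPoch q) (-Real.log q * qRatioSum q z) z := by
  have h := hasDerivAt_tsum_of_norm_le_cpow_div hq0 hq1 hz
    (fun k w hw => hasDerivAt_log_one_sub_cpow hq0 hq1 hw k)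
    (fun k w hw => norm_log_one_sub_le (norm_cpow_add_nat_lt_one hq0 hq1 hw k))
  rwa [tsum_mul_left] at h

theorem hasDerivAt_qRatioSum (hq0 : 0 < q) (hq1 : q < 1) {z : ℂ} (hz : 0 < z.re) :
    HasDerivAt (qRatioSum q)
      (Real.log q * ∑' k : ℕ, (q : ℂ) ^ (z + k) / (1 - (q : ℂ) ^ (z + k)) ^ 2) z := by
  have h := hasDerivAt_tsum_of_norm_le_cpow_div hq0 hq1 hz
    (fun k w hw => hasDerivAt_cpow_div_one_sub_cpow hq0 hq1 hw k)
    (fun k w hw => norm_div_one_sub_le (norm_cpow_add_nat_lt_one hq0 hq1 hw k))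
  rwa [tsum_mul_left] at h

theorem qPoch_cpow_eq_exp (hq0 : 0 < q) (hq1 : q < 1) {z : ℂ} (hz : 0 < z.re) :
    qPoch ((q : ℂ) ^ z) q = exp (qLogPoch q z) := by
  have hterm : ∀ k : ℕ, (q : ℂ) ^ z * (q : ℂ) ^ k = (q : ℂ) ^ (z + k) := fun k => by
    rw [cpow_add _ _ (by exact_mod_cast hq0.ne'), cpow_natCast]
  simp only [qPoch, qLogPoch, hterm]
  exact (cexp_tsum_eq_tprod
    (fun k => slitPlane_ne_zero (one_sub_cpow_add_nat_mem_slitPlane hq0 hq1 hz k))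
    (summable_log_one_sub_cpow hq0 hq1 hz)).symm

theorem cpow_ofReal_add_nat (hq0 : 0 < q) (x : ℝ) (k : ℕ) :
    (q : ℂ) ^ ((x : ℂ) + k) = ((q ^ (x + k) : ℝ) : ℂ) := by
  rw [ofReal_cpow hq0.le]
  push_cast
  rfl

theorem qLogPoch_ofReal (hq0 : 0 < q) (hq1 : q < 1) {x : ℝ} (hx : 0 < x) :
    qLogPoch q x = ((∑' k : ℕ, Real.log (1 - q ^ (x + k)) : ℝ) : ℂ) := by
  rw [qLogPoch, ofReal_tsum]
  refine tsum_congr fun k => ?_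
  have hlt : q ^ (x + k) < 1 := Real.rpow_lt_one hq0.le hq1 (by positivity)
  rw [cpow_ofReal_add_nat hq0, ← ofReal_one, ← ofReal_sub, ofReal_log (by linarith)]

theorem qRatioSum_ofReal (hq0 : 0 < q) (x : ℝ) :
    qRatioSum q x = ((∑' k : ℕ, q ^ (x + k) / (1 - q ^ (x + k)) : ℝ) : ℂ) := by
  simp only [qRatioSum, ofReal_tsum, cpow_ofReal_add_nat hq0]
  push_cast
  rfl

theorem tsum_cpow_div_one_sub_cpow_sq_ofReal (hq0 : 0 < q) (x : ℝ) :
    ∑' k : ℕ, (q : ℂ) ^ ((x : ℂ) + k) / (1 - (q : ℂ) ^ ((x : ℂ) + k)) ^ 2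
      = ((∑' k : ℕ, q ^ (x + k) / (1 - q ^ (x + k)) ^ 2 : ℝ) : ℂ) := by
  simp only [ofReal_tsum, cpow_ofReal_add_nat hq0]
  push_cast
  rfl

end

/-- A branch of `log Γ_q` that is holomorphic on `0 < re z`. -/
noncomputable def qLogGamma (q : ℝ) (z : ℂ) : ℂ :=
  Real.log (1 - q) * (1 - z) + qLogPoch q 1 - qLogPoch q z

section

variable {q : ℝ}

theorem eventually_re_pos_nhds_ofReal {x : ℝ} (hx : 0 < x) : ∀ᶠ z in 𝓝 (x : ℂ), 0 < z.re :=
  (isOpen_lt continuous_const continuous_re).mem_nhds (by simpa using hx)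

theorem qGamma_eq_exp (hq0 : 0 < q) (hq1 : q < 1) {z : ℂ} (hz : 0 < z.re) :
    qGamma q z = exp (qLogGamma q z) := by
  have h1q : (0 : ℝ) < 1 - q := by linarith
  have hpow : (1 - q : ℂ) ^ (1 - z) = exp (Real.log (1 - q) * (1 - z)) := by
    rw [cpow_def_of_ne_zero (by exact_mod_cast h1q.ne'), ← ofReal_one, ← ofReal_sub,
      ofReal_log h1q.le]
  have hpoch : qPoch (q : ℂ) (q : ℂ) = exp (qLogPoch q 1) := by
    simpa using qPoch_cpow_eq_exp hq0 hq1 (z := 1) (by simp)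
  rw [qGamma, hpow, hpoch, qPoch_cpow_eq_exp hq0 hq1 hz, ← Complex.exp_add,
    ← Complex.exp_sub, qLogGamma]

theorem hasDerivAt_qLogGamma (hq0 : 0 < q) (hq1 : q < 1) {z : ℂ} (hz : 0 < z.re) :
    HasDerivAt (qLogGamma q) (-Real.log (1 - q) + Real.log q * qRatioSum q z) z := by
  refine ((((hasDerivAt_id z).const_sub 1).const_mul (Real.log (1 - q) : ℂ)).add_const
    (qLogPoch q 1)).sub (hasDerivAt_qLogPoch hq0 hq1 hz) |>.congr_deriv ?_
  ring

theorem qLogGamma_ofReal_im (hq0 : 0 < q) (hq1 : q < 1) {x : ℝ} (hx : 0 < x) :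
    (qLogGamma q x).im = 0 := by
  rw [qLogGamma, ← ofReal_one, qLogPoch_ofReal hq0 hq1 one_pos, qLogPoch_ofReal hq0 hq1 hx]
  simp

theorem log_qGamma_eventuallyEq (hq0 : 0 < q) (hq1 : q < 1) {x : ℝ} (hx : 0 < x) :
    (fun z => log (qGamma q z)) =ᶠ[𝓝 (x : ℂ)] qLogGamma q := by
  have him : ∀ᶠ z in 𝓝 (x : ℂ), (qLogGamma q z).im ∈ Set.Ioo (-π) π := by
    refine (continuous_im.continuousAt.comp
      (hasDerivAt_qLogGamma hq0 hq1 (by simpa using hx)).continuousAt).eventually_mem ?_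
    simp only [Function.comp_apply, qLogGamma_ofReal_im hq0 hq1 hx]
    exact Ioo_mem_nhds (neg_neg_iff_pos.mpr pi_pos) pi_pos
  filter_upwards [him, eventually_re_pos_nhds_ofReal hx] with z hzim hzre
  rw [qGamma_eq_exp hq0 hq1 hzre, log_exp hzim.1 hzim.2.le]

theorem qDigamma_eventuallyEq (hq0 : 0 < q) (hq1 : q < 1) {x : ℝ} (hx : 0 < x) :
    qDigamma q =ᶠ[𝓝 (x : ℂ)] fun z => -Real.log (1 - q) + Real.log q * qRatioSum q z := by
  filter_upwards [(log_qGamma_eventuallyEq hq0 hq1 hx).eventually_nhds,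
    eventually_re_pos_nhds_ofReal hx] with z hlog hzre
  rw [qDigamma, EventuallyEq.deriv_eq hlog, (hasDerivAt_qLogGamma hq0 hq1 hzre).deriv]

theorem qDigamma_ofReal (hq0 : 0 < q) (hq1 : q < 1) {x : ℝ} (hx : 0 < x) :
    qDigamma q x = ((-Real.log (1 - q)
      + Real.log q * ∑' k : ℕ, q ^ (x + k) / (1 - q ^ (x + k)) : ℝ) : ℂ) := by
  rw [(qDigamma_eventuallyEq hq0 hq1 hx).eq_of_nhds, qRatioSum_ofReal hq0]
  push_cast
  rfl

theorem deriv_qDigamma_ofReal (hq0 : 0 < q) (hq1 : q < 1) {x : ℝ} (hx : 0 < x) :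
    deriv (qDigamma q) x
      = ((Real.log q ^ 2 * ∑' k : ℕ, q ^ (x + k) / (1 - q ^ (x + k)) ^ 2 : ℝ) : ℂ) := by
  rw [(qDigamma_eventuallyEq hq0 hq1 hx).deriv_eq,
    (((hasDerivAt_qRatioSum hq0 hq1 (by simpa using hx)).const_mul
      (Real.log q : ℂ)).const_add _).deriv, tsum_cpow_div_one_sub_cpow_sq_ofReal hq0]
  push_cast
  ring

end

/-- A function holomorphic on `0 < re z` with the same real part as `f0`. -/
noncomputable def f0Branch (q θ : ℝ) (z : ℂ) : ℂ :=
  -fC q θ * Real.log q * z + kappaC q θ * (q : ℂ) ^ z + qLogPoch q z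

section

variable {q : ℝ}

theorem kappaC_eq (hq0 : 0 < q) (hq1 : q < 1) {θ : ℝ} (hθ : 0 < θ) :
    kappaC q θ = ((∑' k : ℕ, q ^ k / (1 - q ^ (θ + k)) ^ 2 : ℝ) : ℂ) := by
  have hsum : ∑' k : ℕ, q ^ (θ + k) / (1 - q ^ (θ + k)) ^ 2
      = q ^ θ * ∑' k : ℕ, q ^ k / (1 - q ^ (θ + k)) ^ 2 := by
    rw [← tsum_mul_left]
    exact tsum_congr fun k => by rw [Real.rpow_add hq0, Real.rpow_natCast]; ring
  have hL : Real.log q ≠ 0 := (Real.log_neg hq0 hq1).ne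
  have hqθ : q ^ θ ≠ 0 := (Real.rpow_pos_of_pos hq0 θ).ne'
  rw [kappaC, deriv_qDigamma_ofReal hq0 hq1 hθ, hsum, ← ofReal_cpow hq0.le,
    div_eq_iff (by exact_mod_cast mul_ne_zero (pow_ne_zero 2 hL) hqθ)]
  push_cast
  ring

theorem fC_im (hq0 : 0 < q) (hq1 : q < 1) {θ : ℝ} (hθ : 0 < θ) : (fC q θ).im = 0 := by
  rw [fC, deriv_qDigamma_ofReal hq0 hq1 hθ, qDigamma_ofReal hq0 hq1 hθ]
  simp only [← ofReal_pow, ← ofReal_div, ← ofReal_sub, ofReal_im]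

theorem re_f0_eq_re_f0Branch (hq0 : 0 < q) (hq1 : q < 1) (θ : ℝ) {z : ℂ} (hz : 0 < z.re) :
    (f0 q θ z).re = (f0Branch q θ z).re := by
  rw [f0, f0Branch, add_re, add_re, qPoch_cpow_eq_exp hq0 hq1 hz, log_re, norm_exp,
    Real.log_exp, add_re, add_re]

theorem hasDerivAt_f0Branch (hq0 : 0 < q) (hq1 : q < 1) (θ : ℝ) {z : ℂ} (hz : 0 < z.re) :
    HasDerivAt (f0Branch q θ) (-fC q θ * Real.log q
      + kappaC q θ * (Real.log q * (q : ℂ) ^ z) - Real.log q * qRatioSum q z) z := by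
  refine ((((hasDerivAt_id z).const_mul (-fC q θ * Real.log q)).add
    ((hasDerivAt_ofReal_cpow hq0 z).const_mul (kappaC q θ))).add
    (hasDerivAt_qLogPoch hq0 hq1 hz)).congr_deriv ?_
  simp only [mul_one]
  ring

theorem im_ofReal_cpow_add_mul_I (hq0 : 0 < q) (a b : ℝ) :
    ((q : ℂ) ^ ((a : ℂ) + b * I)).im = q ^ a * Real.sin (b * Real.log q) := by
  rw [cpow_def_of_ne_zero (by exact_mod_cast hq0.ne'), exp_im, ← ofReal_log hq0.le,
    Real.rpow_def_of_pos hq0]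
  simp [mul_comm b]

theorem im_div_one_sub (w : ℂ) : (w / (1 - w)).im = w.im / ‖1 - w‖ ^ 2 := by
  rw [div_im, Complex.sq_norm, sub_re, sub_im, one_re, one_im]
  ring

theorem qRatioSum_vertical_im (hq0 : 0 < q) (hq1 : q < 1) {X : ℝ} (hX : 0 < X) (Y : ℝ) :
    (qRatioSum q (X + Y * I)).im = Real.sin (Y * Real.log q)
      * ∑' k : ℕ, q ^ (X + k) / ‖1 - (q : ℂ) ^ ((X : ℂ) + Y * I + k)‖ ^ 2 := by
  rw [qRatioSum, im_tsum (summable_cpow_div_one_sub_cpow hq0 hq1 (by simpa using hX)),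
    ← tsum_mul_left]
  refine tsum_congr fun k => ?_
  rw [im_div_one_sub, show (X : ℂ) + Y * I + k = ((X + k : ℝ) : ℂ) + Y * I by push_cast; ring,
    im_ofReal_cpow_add_mul_I hq0]
  ring

theorem summable_rpow_add_nat_div_sq (hq0 : 0 < q) (hq1 : q < 1) {a : ℕ → ℝ} {δ : ℝ}
    (hδ : 0 < δ) (ha : ∀ k, δ ≤ a k) (x : ℝ) :
    Summable fun k : ℕ => q ^ (x + k) / a k ^ 2 := by
  refine .of_nonneg_of_le (fun k => by positivity) (fun k => ?_)
    ((summable_geometric_of_lt_one hq0.le hq1).mul_left (q ^ x / δ ^ 2))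
  rw [Real.rpow_add hq0, Real.rpow_natCast, div_mul_eq_mul_div]
  exact div_le_div_of_nonneg_left (by positivity) (by positivity)
    (pow_le_pow_left₀ hδ.le (ha k) 2)

theorem one_sub_rpow_le_norm_one_sub_cpow (hq0 : 0 < q) (hq1 : q < 1) (z : ℂ) (k : ℕ) :
    1 - q ^ z.re ≤ ‖1 - (q : ℂ) ^ (z + k)‖ := by
  have hle : ‖(q : ℂ) ^ (z + k)‖ ≤ q ^ z.re := by
    rw [norm_cpow_add_nat hq0]
    exact mul_le_of_le_one_right (by positivity) (pow_le_one₀ hq0.le hq1.le)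
  have := norm_sub_norm_le (1 : ℂ) ((q : ℂ) ^ (z + k))
  rw [norm_one] at this
  linarith

end

theorem f0_re_deriv_vertical (q θ : ℝ) (hq0 : 0 < q) (hq1 : q < 1) (hθ : 0 < θ)
    (X : ℝ) (hX : 0 < X) (Y : ℝ) :
    deriv (fun y : ℝ => (f0 q θ ((X : ℂ) + (y : ℂ) * Complex.I)).re) Y =
      -Real.sin (Y * Real.log q) * Real.log q *
        ∑' k : ℕ, q ^ (X + (k : ℝ)) *
          (1 / (1 - q ^ (θ + (k : ℝ))) ^ 2
            - 1 / ‖(1 - (q : ℂ) ^ ((X : ℂ) + (Y : ℂ) * Complex.I + (k : ℂ)))‖ ^ 2) := by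
  have hvert : ∀ y : ℝ, 0 < ((X : ℂ) + y * I).re := fun y => by simpa using hX
  have hre : (fun y : ℝ => (f0 q θ (X + y * I)).re)
      = fun y : ℝ => (f0Branch q θ (X + y * I)).re :=
    funext fun y => re_f0_eq_re_f0Branch hq0 hq1 θ (hvert y)
  have hqθ : q ^ θ < 1 := Real.rpow_lt_one hq0.le hq1 hθ
  have hqX : q ^ X < 1 := Real.rpow_lt_one hq0.le hq1 hX
  have hsum_θ := summable_rpow_add_nat_div_sq hq0 hq1 (sub_pos.2 hqθ)
    (a := fun k : ℕ => 1 - q ^ (θ + k))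
    (fun k => sub_le_sub_left (Real.rpow_le_rpow_of_exponent_ge hq0 hq1.le (by simp)) 1) X
  have hsum_Z := summable_rpow_add_nat_div_sq hq0 hq1 (sub_pos.2 hqX)
    (fun k => by simpa using one_sub_rpow_le_norm_one_sub_cpow hq0 hq1 (X + Y * I) k) X
  have hkappa : q ^ X * ∑' k : ℕ, q ^ k / (1 - q ^ (θ + k)) ^ 2
      = ∑' k : ℕ, q ^ (X + k) / (1 - q ^ (θ + k)) ^ 2 := by
    rw [← tsum_mul_left]
    exact tsum_congr fun k => by rw [Real.rpow_add hq0 X, Real.rpow_natCast]; ring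
  rw [hre, (hasDerivAt_f0Branch hq0 hq1 θ (hvert Y)).re_comp_vertical.deriv]
  simp only [sub_im, add_im, mul_im, neg_re, neg_im, ofReal_re, ofReal_im, fC_im hq0 hq1 hθ,
    kappaC_eq hq0 hq1 hθ, im_ofReal_cpow_add_mul_I hq0, qRatioSum_vertical_im hq0 hq1 hX]
  simp only [mul_sub, mul_one_div]
  rw [hsum_θ.tsum_sub hsum_Z, ← hkappa]
  ring
end

section
/- Fix 0 < q < 1, θ > 0, and rates a_1,…,a_m with exactly k equal to q^θ and the rest greater than q^θ. There exist constants c' > 0 and C' > 0 such that for all complex Z, W with |Z - θ| < c' and |W - θ| < c', one has |φ(Z)/φ(W)| ≤ C' · |(Z-θ)/(W-θ)|^k. -/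
/-!
For a rate `a_j = q^θ`, the first factor of `(q^Z/a_j; q)_∞` is `1 - q^(Z-θ)`, which has a simple
zero at `Z = θ` (derivative `-log q ≠ 0`). Splitting these `k` factors off gives
`φ(Z) = (1 - q^(Z-θ))^k G(Z)`, where every q-Pochhammer symbol left in `G` has an argument of
modulus `< 1` at `Z = θ`, so `G` is continuous and nonzero there. Hence `φ(Z) = (Z - θ)^k H(Z)`
with `H` continuous and nonzero at `θ`; on a small disc `|H|` stays within a factor `2` of
`|H(θ)|`, which gives the bound with `C' = 4`.
-/

open Complex Real Filter

/-- `φ(Z) = ∏_{j=1}^m (q^Z/a_j ; q)_∞ / ((q^Z;q)_∞)^m`. -/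
noncomputable def phiF (q : ℝ) {m : ℕ} (a : Fin m → ℝ) (Z : ℂ) : ℂ :=
  (∏ j : Fin m, qPoch ((q : ℂ) ^ Z / (a j : ℂ)) (q : ℂ)) / (qPoch ((q : ℂ) ^ Z) (q : ℂ)) ^ m

open Topology

namespace qPoch

variable {q : ℂ}

lemma summable_norm_mul_pow (hq : ‖q‖ < 1) (u : ℂ) : Summable fun n : ℕ => ‖u * q ^ n‖ := by
  simpa [norm_pow] using (summable_geometric_of_lt_one (norm_nonneg q) hq).mul_left ‖u‖

lemma multipliable (hq : ‖q‖ < 1) (u : ℂ) : Multipliable fun n : ℕ => 1 - u * q ^ n := by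
  simpa [sub_eq_add_neg] using
    multipliable_one_add_of_summable (f := fun n => -(u * q ^ n))
      (by simpa using summable_norm_mul_pow hq u)

lemma eq_one_sub_mul (hq : ‖q‖ < 1) (u : ℂ) : qPoch u q = (1 - u) * qPoch (u * q) q := by
  have hshift (n : ℕ) : u * q ^ (n + 1) = u * q * q ^ n := by ring
  have := tprod_eq_zero_mul' (f := fun n : ℕ => 1 - u * q ^ n)
    (by simpa only [hshift] using multipliable hq (u * q))
  simpa only [qPoch, pow_zero, mul_one, hshift] using this

lemma ne_zero (hq : ‖q‖ < 1) {u : ℂ} (hu : ‖u‖ < 1) : qPoch u q ≠ 0 := by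
  simp only [qPoch, sub_eq_add_neg]
  refine tprod_one_add_ne_zero_of_summable (fun n => ?_)
    (by simpa using summable_norm_mul_pow hq u)
  rw [← sub_eq_add_neg, sub_ne_zero]
  intro h
  have : ‖u * q ^ n‖ < 1 := by
    rw [norm_mul, norm_pow]
    exact mul_lt_one_of_nonneg_of_lt_one_left (norm_nonneg u) hu
      (pow_le_one₀ (norm_nonneg q) hq.le)
  simp [← h] at this

lemma continuous (hq : ‖q‖ < 1) : Continuous fun u => qPoch u q := by
  refine continuous_iff_continuousAt.2 fun u₀ => ?_
  have hprod : HasProdLocallyUniformlyOn (fun n u => 1 + -(u * q ^ n))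
      (fun u => ∏' n, (1 + -(u * q ^ n))) (Metric.ball 0 (‖u₀‖ + 1)) := by
    refine Summable.hasProdLocallyUniformlyOn_nat_one_add Metric.isOpen_ball
      (summable_norm_mul_pow hq (‖u₀‖ + 1 : ℝ)) (.of_forall fun n u hu => ?_) fun n => by fun_prop
    rw [mem_ball_zero_iff] at hu
    rw [norm_neg, norm_mul, norm_mul, Complex.norm_real, Real.norm_of_nonneg (by positivity)]
    gcongr
  have := (hprod.tendstoLocallyUniformlyOn_finsetRange.continuousOn
    (.of_forall fun N => by fun_prop)).continuousAt
    (Metric.isOpen_ball.mem_nhds (mem_ball_zero_iff.2 (lt_add_one ‖u₀‖)))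
  simpa [qPoch, sub_eq_add_neg] using this

end qPoch

section RatioBound

variable {𝕜 : Type*} [NormedField 𝕜] {f H : 𝕜 → 𝕜} {x₀ : 𝕜}

theorem exists_norm_div_le_of_eventuallyEq_sub_pow_mul (k : ℕ) (hH : ContinuousAt H x₀)
    (hH₀ : H x₀ ≠ 0) (hf : ∀ᶠ x in 𝓝 x₀, f x = (x - x₀) ^ k * H x) :
    ∃ c > (0 : ℝ), ∃ C > (0 : ℝ), ∀ x y : 𝕜, ‖x - x₀‖ < c → ‖y - x₀‖ < c →
      ‖f x / f y‖ ≤ C * (‖x - x₀‖ / ‖y - x₀‖) ^ k := by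
  set g := ‖H x₀‖
  have hg : 0 < g := norm_pos_iff.2 hH₀
  have hnear : ∀ᶠ x in 𝓝 x₀, ‖H x‖ ∈ Set.Ioo (g / 2) (2 * g) :=
    hH.norm.eventually (Ioo_mem_nhds (by linarith) (by linarith))
  obtain ⟨c, hc, hball⟩ := Metric.eventually_nhds_iff.1 (hf.and hnear)
  refine ⟨c, hc, 4, by norm_num, fun x y hx hy => ?_⟩
  obtain ⟨hfx, -, hHx⟩ := hball (y := x) (by rwa [dist_eq_norm])
  obtain ⟨hfy, hHy, -⟩ := hball (y := y) (by rwa [dist_eq_norm])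
  have hratio : ‖H x‖ / ‖H y‖ ≤ 4 := by
    rw [div_le_iff₀ (by linarith)]; linarith
  -- also valid for `y = x₀`, where both sides divide by zero
  calc ‖f x / f y‖ = (‖x - x₀‖ / ‖y - x₀‖) ^ k * (‖H x‖ / ‖H y‖) := by
        rw [hfx, hfy, norm_div, norm_mul, norm_mul, norm_pow, norm_pow, mul_div_mul_comm, div_pow]
    _ ≤ (‖x - x₀‖ / ‖y - x₀‖) ^ k * 4 := by gcongr
    _ = 4 * (‖x - x₀‖ / ‖y - x₀‖) ^ k := mul_comm _ _

end RatioBound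

theorem exists_norm_div_le_of_eventuallyEq_pow_mul {𝕜 : Type*} [NontriviallyNormedField 𝕜]
    {f g G : 𝕜 → 𝕜} {x₀ d : 𝕜} (k : ℕ) (hg : HasDerivAt g d x₀) (hg₀ : g x₀ = 0) (hd : d ≠ 0)
    (hG : ContinuousAt G x₀) (hG₀ : G x₀ ≠ 0) (hf : ∀ᶠ x in 𝓝 x₀, f x = g x ^ k * G x) :
    ∃ c > (0 : ℝ), ∃ C > (0 : ℝ), ∀ x y : 𝕜, ‖x - x₀‖ < c → ‖y - x₀‖ < c →
      ‖f x / f y‖ ≤ C * (‖x - x₀‖ / ‖y - x₀‖) ^ k := by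
  refine exists_norm_div_le_of_eventuallyEq_sub_pow_mul (H := fun x => dslope g x₀ x ^ k * G x) k
    (((continuousAt_dslope_same.2 hg.differentiableAt).pow k).mul hG)
    (mul_ne_zero (pow_ne_zero k (by rwa [dslope_same, hg.deriv])) hG₀) ?_
  filter_upwards [hf] with x hx
  rw [hx, ← mul_assoc, ← mul_pow]
  congr 2
  simpa [hg₀] using (sub_smul_dslope g x₀ x).symm

noncomputable def phiRegular (q θ : ℝ) {m : ℕ} (a : Fin m → ℝ) (Z : ℂ) : ℂ :=
  qPoch ((q : ℂ) ^ (Z - θ) * q) q ^ (Finset.univ.filter fun j => a j = q ^ θ).card *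
    (∏ j ∈ Finset.univ.filter fun j => a j ≠ q ^ θ, qPoch ((q : ℂ) ^ Z / a j) q) /
    qPoch ((q : ℂ) ^ Z) q ^ m

section phi

variable {q θ : ℝ} {m : ℕ} (a : Fin m → ℝ)

lemma norm_ofReal_lt_one (hq0 : 0 < q) (hq1 : q < 1) : ‖(q : ℂ)‖ < 1 := by
  rwa [Complex.norm_real, Real.norm_of_nonneg hq0.le]

lemma norm_ofReal_cpow_lt_one (hq0 : 0 < q) (hq1 : q < 1) {Z : ℂ} (hZ : 0 < Z.re) :
    ‖(q : ℂ) ^ Z‖ < 1 := by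
  rw [Complex.norm_cpow_eq_rpow_re_of_pos hq0]
  exact Real.rpow_lt_one hq0.le hq1 hZ

lemma phiF_eq_mul_phiRegular (hq0 : 0 < q) (hq1 : q < 1) (Z : ℂ) :
    phiF q a Z = (1 - (q : ℂ) ^ (Z - θ)) ^ (Finset.univ.filter fun j => a j = q ^ θ).card *
      phiRegular q θ a Z := by
  have hcrit : ∀ j ∈ Finset.univ.filter fun j => a j = q ^ θ,
      qPoch ((q : ℂ) ^ Z / a j) q =
        (1 - (q : ℂ) ^ (Z - θ)) * qPoch ((q : ℂ) ^ (Z - θ) * q) q := by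
    intro j hj
    rw [(Finset.mem_filter.1 hj).2, Complex.ofReal_cpow hq0.le, ← Complex.cpow_sub _ _
      (Complex.ofReal_ne_zero.2 hq0.ne'), qPoch.eq_one_sub_mul (norm_ofReal_lt_one hq0 hq1)]
  rw [phiF, phiRegular, ← Finset.prod_filter_mul_prod_filter_not Finset.univ
    (fun j => a j = q ^ θ), Finset.prod_congr rfl hcrit, Finset.prod_mul_distrib,
    Finset.prod_const, Finset.prod_const]
  ring

lemma continuousAt_phiRegular (hq0 : 0 < q) (hq1 : q < 1) (hθ : 0 < θ) :
    ContinuousAt (phiRegular q θ a) θ := by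
  have hq : ‖(q : ℂ)‖ < 1 := norm_ofReal_lt_one hq0 hq1
  have hcpow {f : ℂ → ℂ} (hf : Continuous f) : Continuous fun Z => (q : ℂ) ^ f Z :=
    hf.const_cpow (Or.inl (Complex.ofReal_ne_zero.2 hq0.ne'))
  have hden : qPoch ((q : ℂ) ^ (θ : ℂ)) q ≠ 0 :=
    qPoch.ne_zero hq (norm_ofReal_cpow_lt_one hq0 hq1 (by simpa))
  unfold phiRegular
  refine ContinuousAt.div ?_ ?_ (pow_ne_zero m hden)
  · refine Continuous.continuousAt (.mul (.pow ?_ _) (continuous_finsetProd _ fun j _ => ?_))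
    · exact (qPoch.continuous hq).comp ((hcpow (continuous_id.sub continuous_const)).mul
        continuous_const)
    · exact (qPoch.continuous hq).comp ((hcpow continuous_id).div_const _)
  · exact ((qPoch.continuous hq).comp (hcpow continuous_id)).continuousAt.pow m

lemma phiRegular_ne_zero (hq0 : 0 < q) (hq1 : q < 1) (hθ : 0 < θ)
    (ha : ∀ j, a j = q ^ θ ∨ q ^ θ < a j) : phiRegular q θ a θ ≠ 0 := by
  have hq : ‖(q : ℂ)‖ < 1 := norm_ofReal_lt_one hq0 hq1
  have hqθ : ‖(q : ℂ) ^ (θ : ℂ)‖ < 1 := norm_ofReal_cpow_lt_one hq0 hq1 (by simpa)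
  refine div_ne_zero (mul_ne_zero (pow_ne_zero _ ?_) (Finset.prod_ne_zero_iff.2 fun j hj => ?_))
    (pow_ne_zero _ (qPoch.ne_zero hq hqθ))
  · rw [sub_self, Complex.cpow_zero, one_mul]
    exact qPoch.ne_zero hq hq
  · have haj : q ^ θ < a j := (ha j).resolve_left (Finset.mem_filter.1 hj).2
    have haj₀ : 0 < a j := (Real.rpow_pos_of_pos hq0 θ).trans haj
    refine qPoch.ne_zero hq ?_
    rwa [norm_div, Complex.norm_real, Real.norm_of_nonneg haj₀.le, div_lt_one haj₀,
      Complex.norm_cpow_eq_rpow_re_of_pos hq0, Complex.ofReal_re]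

lemma hasDerivAt_one_sub_cpow (hq0 : 0 < q) :
    HasDerivAt (fun Z : ℂ => 1 - (q : ℂ) ^ (Z - θ)) (-Real.log q) θ := by
  have := (((hasDerivAt_id (θ : ℂ)).sub_const (θ : ℂ)).const_cpow
    (Or.inl (Complex.ofReal_ne_zero.2 hq0.ne'))).const_sub 1
  simpa [Complex.ofReal_log hq0.le] using this

end phi

theorem phi_ratio_bound_critical (q θ : ℝ) (hq0 : 0 < q) (hq1 : q < 1) (hθ : 0 < θ)
    (m k : ℕ) (a : Fin m → ℝ)
    (ha : ∀ j, a j = q ^ θ ∨ q ^ θ < a j)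
    (hk : (Finset.univ.filter (fun j : Fin m => a j = q ^ θ)).card = k) :
    ∃ c' > (0 : ℝ), ∃ C' > (0 : ℝ), ∀ Z W : ℂ,
      ‖Z - (θ : ℂ)‖ < c' → ‖W - (θ : ℂ)‖ < c' →
      ‖phiF q a Z / phiF q a W‖ ≤
        C' * (‖Z - (θ : ℂ)‖ / ‖W - (θ : ℂ)‖) ^ k := by
  refine exists_norm_div_le_of_eventuallyEq_pow_mul k (hasDerivAt_one_sub_cpow hq0) (by simp)
    ?_ (continuousAt_phiRegular a hq0 hq1 hθ) (phiRegular_ne_zero a hq0 hq1 hθ ha)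
    (.of_forall fun Z => hk ▸ phiF_eq_mul_phiRegular a hq0 hq1 Z)
  exact neg_ne_zero.2 (Complex.ofReal_ne_zero.2 (Real.log_neg hq0 hq1).ne)
end
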